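/- Let F be a field, t ≥ 1, n ≥ 2t + 1, and let A be an n × n matrix over F such that every square submatrix of A has nonzero determinant. Choose any t + 1 distinct rows of A and let U be their linear span, and choose any t distinct rows of A and let V be their linear span. Let C = (U*V)^⊥ be the dual of the code U*V. If C is nonzero, then the minimum distance of C satisfies d(C) ≥ 2t + 1, and (U, V) is a t-error correcting pair for C. -/
import Mathlib


open Finset

noncomputable section

/-- The componentwise (star) product on `Fin n → F`. -/
def starMul {F : Type*} [Mul F] {n : ℕ} (u v : Fin n → F) : Fin n → F :=
  fun i => u i * v i

/-- The standard bilinear form `⟨u,v⟩ = ∑ i, u i * v i` on `Fin n → F`. -/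
def bil {F : Type*} [Semiring F] {n : ℕ} (u v : Fin n → F) : F :=
  ∑ i, u i * v i

/-- The Hamming weight of a vector: the number of its nonzero coordinates. -/
def hWeight {F : Type*} [Zero F] {n : ℕ} (v : Fin n → F) : ℕ :=
  Set.ncard {i | v i ≠ 0}

/-- The dual code of a linear code `C ⊆ F^n` with respect to `⟨u,v⟩ = ∑ i, u i * v i`. -/
def dualCode {F : Type*} [Field F] {n : ℕ} (C : Submodule F (Fin n → F)) :
    Submodule F (Fin n → F) where
  carrier := {x | ∀ c ∈ C, bil x c = 0}
  zero_mem' := by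
    intro c hc
    simp [bil]
  add_mem' := by
    intro a b ha hb c hc
    have h : bil (a + b) c = bil a c + bil b c := by
      simp only [bil, Pi.add_apply, add_mul]
      exact Finset.sum_add_distrib
    simp only [Set.mem_setOf_eq] at ha hb ⊢
    rw [h, ha c hc, hb c hc, add_zero]
  smul_mem' := by
    intro r a ha c hc
    have h : bil (r • a) c = r * bil a c := by
      simp only [bil, Pi.smul_apply, smul_eq_mul, Finset.mul_sum, mul_assoc]
    simp only [Set.mem_setOf_eq] at ha ⊢
    rw [h, ha c hc, mul_zero]

/-- The minimum distance of a code: the least Hamming weight of a nonzero codeword. -/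
def minDist {F : Type*} [Field F] {n : ℕ} (C : Submodule F (Fin n → F)) : ℕ :=
  sInf {d | ∃ c ∈ C, c ≠ 0 ∧ hWeight c = d}

/-- A code is MDS if its minimum distance equals `n - dim + 1`. -/
def IsMDS {F : Type*} [Field F] {n : ℕ} (C : Submodule F (Fin n → F)) : Prop :=
  minDist C = n - Module.finrank F C + 1

/-- `U*V`: the span of all componentwise products `u*v` with `u ∈ U`, `v ∈ V`. -/
def starSpan {F : Type*} [Field F] {n : ℕ} (U V : Submodule F (Fin n → F)) :
    Submodule F (Fin n → F) :=
  Submodule.span F {w | ∃ u ∈ U, ∃ v ∈ V, w = starMul u v}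

/-- `(U, V)` is a `t`-error correcting pair for `C`. -/
def IsECP {F : Type*} [Field F] {n : ℕ} (t : ℕ) (U V C : Submodule F (Fin n → F)) : Prop :=
  starSpan U V ≤ dualCode C ∧
  t < Module.finrank F U ∧
  n < minDist U + minDist C ∧
  t < minDist (dualCode V)

section Stmt16Aux

open Matrix

variable {F : Type*} [Field F]

lemma bil_comm {n : ℕ} (u v : Fin n → F) : bil u v = bil v u := by
  simp [bil, mul_comm]

/-- All square submatrices of `B` are nonsingular. -/
def AllSq {p q : ℕ} (B : Matrix (Fin p) (Fin q) F) : Prop :=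
  ∀ (s : ℕ) (r : Fin s → Fin p) (c : Fin s → Fin q), 1 ≤ s →
    Function.Injective r → Function.Injective c → (B.submatrix r c).det ≠ 0

lemma AllSq.submatrix {p q p' q' : ℕ} {B : Matrix (Fin p) (Fin q) F}
    (hB : AllSq B) {r : Fin p' → Fin p} {c : Fin q' → Fin q}
    (hr : Function.Injective r) (hc : Function.Injective c) :
    AllSq (B.submatrix r c) := by
  intro s r' c' hs hr' hc'
  rw [Matrix.submatrix_submatrix]
  exact hB s (r ∘ r') (c ∘ c') hs (hr.comp hr') (hc.comp hc')

lemma AllSq.transpose {p q : ℕ} {B : Matrix (Fin p) (Fin q) F} (hB : AllSq B) :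
    AllSq Bᵀ := by
  intro s r c hs hr hc
  rw [show Bᵀ.submatrix r c = (B.submatrix c r)ᵀ from
    (Matrix.transpose_submatrix B c r).symm, Matrix.det_transpose]
  exact hB s c r hs hc hr

lemma sq_mulVec_zero {s : ℕ} {B : Matrix (Fin s) (Fin s) F} (h : B.det ≠ 0)
    {x : Fin s → F} (hx : B.mulVec x = 0) : x = 0 := by
  have : Invertible B := B.invertibleOfIsUnitDet (isUnit_iff_ne_zero.mpr h)
  exact Matrix.mulVec_injective_of_invertible B (hx.trans (Matrix.mulVec_zero B).symm)

/-- A matrix with all square submatrices nonsingular and at least as many rows as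
columns has trivial kernel. -/
lemma AllSq.fullCol {p q : ℕ} {B : Matrix (Fin p) (Fin q) F} (hB : AllSq B)
    (hpq : q ≤ p) {x : Fin q → F} (hx : B.mulVec x = 0) : x = 0 := by
  rcases Nat.eq_zero_or_pos q with h0 | h1
  · subst h0; funext i; exact i.elim0
  · have hdet := hB q (Fin.castLE hpq) id h1 (Fin.castLE_injective hpq) Function.injective_id
    apply sq_mulVec_zero hdet
    funext k
    have : (B.submatrix (Fin.castLE hpq) id).mulVec x k
        = B.mulVec x (Fin.castLE hpq k) := by
      simp [Matrix.mulVec, Matrix.submatrix_apply, dotProduct]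
    rw [this, hx]; rfl

/-- Core dimension-counting lemma: if `B` is an `m × (m+q)` matrix with all square
submatrices nonsingular, then its kernel cannot contain more than `q` linearly
independent vectors. -/
lemma AllSq.core2 {m q t' : ℕ} {B : Matrix (Fin m) (Fin (m + q)) F} (hB : AllSq B)
    (hm : 1 ≤ m) {e : Fin t' → Fin (m + q) → F} (he : LinearIndependent F e)
    (hke : ∀ l, B.mulVec (e l) = 0) : t' ≤ q := by
  set W := Submodule.span F (Set.range e) with hW
  have hWdim : Module.finrank F W = t' := by
    rw [hW, finrank_span_eq_card he, Fintype.card_fin]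
  have hWker : ∀ w ∈ W, B.mulVec w = 0 := by
    intro w hw
    have hle : W ≤ LinearMap.ker B.mulVecLin := by
      rw [hW, Submodule.span_le]
      rintro _ ⟨l, rfl⟩
      simpa [LinearMap.mem_ker] using hke l
    simpa using hle hw
  have key : ∀ w ∈ W, (∀ j : Fin q, w (Fin.natAdd m j) = 0) → w = 0 := by
    intro w hw hz
    have hBw := hWker w hw
    have hdet := hB m id (Fin.castAdd q) hm Function.injective_id (Fin.castAdd_injective m q)
    have hsub : (B.submatrix id (Fin.castAdd q)).mulVec (fun i => w (Fin.castAdd q i)) = 0 := by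
      funext k
      have h1 : B.mulVec w k
          = ∑ i : Fin m, B k (Fin.castAdd q i) * w (Fin.castAdd q i)
            + ∑ j : Fin q, B k (Fin.natAdd m j) * w (Fin.natAdd m j) := by
        rw [show B.mulVec w k = ∑ i, B k i * w i from rfl]
        exact Fin.sum_univ_add _
      have h2 : ∑ j : Fin q, B k (Fin.natAdd m j) * w (Fin.natAdd m j) = 0 := by
        apply Finset.sum_eq_zero; intro j _; rw [hz j, mul_zero]
      have h3 := congrFun hBw k
      simp only [Pi.zero_apply] at h3
      rw [h1, h2, add_zero] at h3
      simpa [Matrix.mulVec, Matrix.submatrix_apply, dotProduct] using h3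
    have hcast := sq_mulVec_zero hdet hsub
    funext i
    refine Fin.addCases (fun i => ?_) (fun j => ?_) i
    · exact congrFun hcast i
    · exact hz j
  have hinj : Function.Injective ((LinearMap.funLeft F F (Fin.natAdd m)).comp W.subtype) := by
    rw [← LinearMap.ker_eq_bot, LinearMap.ker_eq_bot']
    rintro ⟨w, hw⟩ h0
    have hz : ∀ j : Fin q, w (Fin.natAdd m j) = 0 := by
      intro j
      have := congrFun h0 j
      simpa [LinearMap.funLeft] using this
    exact Subtype.ext (key w hw hz)
  have hfin := LinearMap.finrank_le_finrank_of_injective hinj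
  rw [hWdim, Module.finrank_pi, Fintype.card_fin] at hfin
  exact hfin

lemma sum_support {n s : ℕ} {S : Finset (Fin n)} (h : S.card = s) (f : Fin n → F)
    (hf : ∀ i ∉ S, f i = 0) :
    ∑ j : Fin s, f ((S.orderIsoOfFin h) j) = ∑ i, f i := by
  have h1 : ∑ j : Fin s, f ((S.orderIsoOfFin h) j) = ∑ i ∈ S, f i := by
    rw [← Finset.sum_coe_sort S f]
    exact Equiv.sum_comp (S.orderIsoOfFin h).toEquiv (fun x : ↥S => f ↑x)
  rw [h1]
  exact (Finset.sum_subset (Finset.subset_univ S) (fun i _ hi => hf i hi))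

lemma hWeight_eq {n : ℕ} (v : Fin n → F) [DecidablePred fun i => v i ≠ 0] :
    hWeight v = (Finset.univ.filter fun i => v i ≠ 0).card := by
  rw [hWeight, show {i | v i ≠ 0} = ↑(Finset.univ.filter fun i => v i ≠ 0) by ext i; simp,
    Set.ncard_coe_finset]

lemma minDist_lower {n : ℕ} {C : Submodule F (Fin n → F)} (hC : C ≠ ⊥) {k : ℕ}
    (h : ∀ c ∈ C, c ≠ 0 → k ≤ hWeight c) : k ≤ minDist C := by
  obtain ⟨c, hc, hc0⟩ := Submodule.exists_mem_ne_zero_of_ne_bot hC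
  have hne : {d | ∃ c ∈ C, c ≠ 0 ∧ hWeight c = d}.Nonempty := ⟨hWeight c, c, hc, hc0, rfl⟩
  obtain ⟨c', hc', h0', hw'⟩ := Nat.sInf_mem hne
  rw [minDist, ← hw']
  exact h c' hc' h0'

lemma bil_span_zero {n : ℕ} {x : Fin n → F} {s : Set (Fin n → F)}
    (h : ∀ v ∈ s, bil x v = 0) : ∀ v ∈ Submodule.span F s, bil x v = 0 := by
  intro v hv
  induction hv using Submodule.span_induction with
  | mem v hv => exact h v hv
  | zero => simp [bil]
  | add a b _ _ ha hb =>
      have : bil x (a + b) = bil x a + bil x b := by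
        simp only [bil, Pi.add_apply, mul_add]
        exact Finset.sum_add_distrib
      rw [this, ha, hb, add_zero]
  | smul r a _ ha =>
      have : bil x (r • a) = r * bil x a := by
        simp only [bil, Pi.smul_apply, smul_eq_mul, Finset.mul_sum]
        exact Finset.sum_congr rfl fun i _ => by ring
      rw [this, ha, mul_zero]

lemma mem_dualCode {n : ℕ} {V : Submodule F (Fin n → F)} {x : Fin n → F} :
    x ∈ dualCode V ↔ ∀ c ∈ V, bil x c = 0 := Iff.rfl

end Stmt16Aux

open Matrix

/-- random selection of error-correcting pairs: if every square submatrix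
of `A` has nonzero determinant, `U` is the span of any `t+1` distinct rows and `V` of any
`t` distinct rows, and `C = (U*V)^⊥` is nonzero, then `d(C) ≥ 2t+1` and `(U,V)` is a
`t`-error correcting pair for `C`. -/
theorem stmt16 {F : Type*} [Field F] (n t : ℕ) (ht : 1 ≤ t) (hn : 2 * t + 1 ≤ n)
    (A : Matrix (Fin n) (Fin n) F)
    (hA : ∀ (s : ℕ) (r c : Fin s → Fin n), 1 ≤ s →
      Function.Injective r → Function.Injective c → (A.submatrix r c).det ≠ 0)
    (rU : Fin (t + 1) → Fin n) (hrU : Function.Injective rU)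
    (rV : Fin t → Fin n) (hrV : Function.Injective rV)
    (U V C : Submodule F (Fin n → F))
    (hUdef : U = Submodule.span F (Set.range fun l : Fin (t + 1) => A (rU l)))
    (hVdef : V = Submodule.span F (Set.range fun l : Fin t => A (rV l)))
    (hCdef : C = dualCode (starSpan U V))
    (hC0 : C ≠ ⊥) :
    2 * t + 1 ≤ minDist C ∧ IsECP t U V C := by
  classical
  have hAall : AllSq A := fun s r c => hA s r c
  have htn1 : t + 1 ≤ n := by omega
  have hentry : ∀ i j : Fin n, A i j ≠ 0 := by
    intro i j h0
    have hd := hA 1 (fun _ => i) (fun _ => j) le_rfl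
      (fun a b _ => Subsingleton.elim a b) (fun a b _ => Subsingleton.elim a b)
    apply hd
    rw [Matrix.det_fin_one]
    exact h0
  have hUrow : ∀ k, A (rU k) ∈ U := fun k => hUdef ▸ Submodule.subset_span ⟨k, rfl⟩
  have hVrow : ∀ l, A (rV l) ∈ V := fun l => hVdef ▸ Submodule.subset_span ⟨l, rfl⟩
  have hCw : ∀ c ∈ C, c ≠ 0 → 2 * t + 1 ≤ hWeight c := by
    intro c hc hc0
    by_contra hlt
    push_neg at hlt
    set S : Finset (Fin n) := Finset.univ.filter (fun i => c i ≠ 0) with hSdef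
    have hsw : hWeight c = S.card := hWeight_eq c
    have hs1 : 1 ≤ S.card := by
      rcases Function.ne_iff.mp hc0 with ⟨i, hi⟩
      have hi' : c i ≠ 0 := by simpa using hi
      exact Finset.card_pos.mpr ⟨i, by simp [hSdef, hi']⟩
    have hs2t : S.card ≤ 2 * t := by omega
    set σ : Fin S.card → Fin n := fun j => ((S.orderIsoOfFin rfl) j : Fin n) with hσdef
    have hσinj : Function.Injective σ := fun a b hab =>
      (S.orderIsoOfFin rfl).injective (Subtype.ext hab)
    have hσne : ∀ j, c (σ j) ≠ 0 := by
      intro j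
      have hmem : σ j ∈ S := ((S.orderIsoOfFin rfl) j).2
      simpa [hSdef] using hmem
    have horth : ∀ (k : Fin (t+1)) (l : Fin t),
        ∑ j : Fin S.card, A (rU k) (σ j) * (c (σ j) * A (rV l) (σ j)) = 0 := by
      intro k l
      have hw : starMul (A (rU k)) (A (rV l)) ∈ starSpan U V :=
        Submodule.subset_span ⟨A (rU k), hUrow k, A (rV l), hVrow l, rfl⟩
      have h0 : bil c (starMul (A (rU k)) (A (rV l))) = 0 := by
        rw [hCdef] at hc
        exact hc _ hw
      have h0' : ∑ i, c i * (A (rU k) i * A (rV l) i) = 0 := h0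
      have hss : ∑ j : Fin S.card, A (rU k) (σ j) * (c (σ j) * A (rV l) (σ j))
          = ∑ i, A (rU k) i * (c i * A (rV l) i) :=
        sum_support rfl (fun i => A (rU k) i * (c i * A (rV l) i))
          (fun i hi => by
            have hci : c i = 0 := by
              by_contra hne; exact hi (by simp [hSdef, hne])
            simp [hci])
      rw [hss, ← h0']
      exact Finset.sum_congr rfl fun i _ => by ring
    set B : Matrix (Fin (t+1)) (Fin S.card) F := A.submatrix rU σ with hBdef
    have hBall : AllSq B := hAall.submatrix hrU hσinj
    set e : Fin t → Fin S.card → F := fun l j => c (σ j) * A (rV l) (σ j) with hedef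
    have hBe : ∀ l, B.mulVec (e l) = 0 := by
      intro l; funext k
      exact horth k l
    rcases le_or_gt S.card (t+1) with hcase | hcase
    · have hel : e ⟨0, ht⟩ = 0 := hBall.fullCol hcase (hBe _)
      have hzero : c (σ ⟨0, hs1⟩) * A (rV ⟨0, ht⟩) (σ ⟨0, hs1⟩) = 0 :=
        congrFun hel ⟨0, hs1⟩
      exact mul_ne_zero (hσne _) (hentry _ _) hzero
    · have hsplit : S.card = (t+1) + (S.card - (t+1)) := by omega
      set q' := S.card - (t+1) with hq'
      set ρ : Fin ((t+1) + q') → Fin S.card := fun j => Fin.cast hsplit.symm j with hρdef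
      have hρbij : Function.Bijective ρ := (finCongr hsplit.symm).bijective
      set σ' : Fin ((t+1)+q') → Fin n := σ ∘ ρ with hσ'def
      have hσ'inj : Function.Injective σ' := hσinj.comp hρbij.injective
      set B' : Matrix (Fin (t+1)) (Fin ((t+1)+q')) F := A.submatrix rU σ' with hB'def
      have hB'all : AllSq B' := hAall.submatrix hrU hσ'inj
      set e' : Fin t → Fin ((t+1)+q') → F := fun l j => e l (ρ j) with he'def
      have hB'e : ∀ l, B'.mulVec (e' l) = 0 := by
        intro l; funext k
        have h1 : ∑ j : Fin S.card, B k j * e l j = 0 := congrFun (hBe l) k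
        exact (Fintype.sum_bijective ρ hρbij (fun j => B' k j * e' l j)
          (fun j => B k j * e l j) (fun j => rfl)).trans h1
      have hli : LinearIndependent F e' := by
        rw [Fintype.linearIndependent_iff]
        intro a ha
        have hN : ((A.submatrix rV σ')ᵀ).mulVec a = 0 := by
          funext j
          have h1 := congrFun ha j
          simp only [Finset.sum_apply, Pi.smul_apply, smul_eq_mul, Pi.zero_apply,
            he'def, hedef] at h1
          have h2 : c (σ (ρ j)) * ∑ l, A (rV l) (σ (ρ j)) * a l = 0 := by
            rw [Finset.mul_sum, ← h1]
            exact Finset.sum_congr rfl fun l _ => by ring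
          have h3 := (mul_eq_zero.mp h2).resolve_left (hσne (ρ j))
          exact h3
        have ha0 := ((hAall.submatrix hrV hσ'inj).transpose).fullCol (by omega) hN
        exact fun l => congrFun ha0 l
      have hcontra := hB'all.core2 (by omega) hli hB'e
      omega
  have h2t1 : 2 * t + 1 ≤ minDist C := minDist_lower hC0 hCw
  have hliU : LinearIndependent F (fun k : Fin (t+1) => A (rU k)) := by
    rw [Fintype.linearIndependent_iff]
    intro a ha
    have hN : ((A.submatrix rU (Fin.castLE htn1))ᵀ).mulVec a = 0 := by
      funext j
      have h1 := congrFun ha (Fin.castLE htn1 j)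
      simp only [Finset.sum_apply, Pi.smul_apply, smul_eq_mul, Pi.zero_apply] at h1
      have h2 : ∑ k, A (rU k) (Fin.castLE htn1 j) * a k = 0 := by
        rw [← h1]
        exact Finset.sum_congr rfl fun k _ => mul_comm _ _
      exact h2
    have ha0 := ((hAall.submatrix hrU (Fin.castLE_injective htn1)).transpose).fullCol le_rfl hN
    exact fun k => congrFun ha0 k
  have hdimU : Module.finrank F U = t + 1 := by
    rw [hUdef, finrank_span_eq_card hliU, Fintype.card_fin]
  have hUbot : U ≠ ⊥ := by
    rw [Submodule.ne_bot_iff]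
    refine ⟨A (rU ⟨0, Nat.succ_pos t⟩), hUrow _, fun h => ?_⟩
    exact hentry (rU ⟨0, Nat.succ_pos t⟩) ⟨0, by omega⟩ (congrFun h ⟨0, by omega⟩)
  have hUw : ∀ u ∈ U, u ≠ 0 → n - t ≤ hWeight u := by
    intro u hu hu0
    by_contra hlt
    push_neg at hlt
    have hcard : (Finset.univ.filter fun i => u i ≠ 0).card
        + (Finset.univ.filter fun i => ¬ u i ≠ 0).card = n := by
      simpa using Finset.card_filter_add_card_filter_not
        (s := (Finset.univ : Finset (Fin n))) (fun i => u i ≠ 0)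
    have hwu : hWeight u = (Finset.univ.filter fun i => u i ≠ 0).card := hWeight_eq u
    have hZcard : t + 1 ≤ (Finset.univ.filter fun i => ¬ u i ≠ 0).card := by omega
    obtain ⟨Z, hZsub, hZc⟩ := Finset.exists_subset_card_eq hZcard
    set τ : Fin (t+1) → Fin n := fun j => ((Z.orderIsoOfFin hZc) j : Fin n) with hτdef
    have hτinj : Function.Injective τ := fun a b hab =>
      (Z.orderIsoOfFin hZc).injective (Subtype.ext hab)
    have hτzero : ∀ j, u (τ j) = 0 := by
      intro j
      have hmem : τ j ∈ Z := ((Z.orderIsoOfFin hZc) j).2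
      have := hZsub hmem
      simpa using this
    obtain ⟨a, ha⟩ := (Submodule.mem_span_range_iff_exists_fun F).mp (hUdef ▸ hu)
    have hN : ((A.submatrix rU τ)ᵀ).mulVec a = 0 := by
      funext j
      have h1 := congrFun ha (τ j)
      simp only [Finset.sum_apply, Pi.smul_apply, smul_eq_mul] at h1
      rw [hτzero j] at h1
      have h2 : ∑ k, A (rU k) (τ j) * a k = 0 := by
        rw [← h1]
        exact Finset.sum_congr rfl fun k _ => mul_comm _ _
      exact h2
    have ha0 := ((hAall.submatrix hrU hτinj).transpose).fullCol le_rfl hN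
    apply hu0
    rw [← ha, ha0]
    simp
  have hU1 : n - t ≤ minDist U := minDist_lower hUbot hUw
  have hVdual_bot : dualCode V ≠ ⊥ := by
    rw [Submodule.ne_bot_iff]
    set φ : (Fin n → F) →ₗ[F] (Fin t → F) := (A.submatrix rV id).mulVecLin with hφdef
    have hker : LinearMap.ker φ ≠ ⊥ := by
      intro hbot
      have h1 := LinearMap.finrank_range_add_finrank_ker φ
      rw [hbot, finrank_bot, add_zero, Module.finrank_pi, Fintype.card_fin] at h1
      have h2 : Module.finrank F (LinearMap.range φ) ≤ t := by
        have h3 := Submodule.finrank_le (LinearMap.range φ)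
        rwa [Module.finrank_pi, Fintype.card_fin] at h3
      omega
    obtain ⟨x, hx, hx0⟩ := Submodule.exists_mem_ne_zero_of_ne_bot hker
    refine ⟨x, mem_dualCode.mpr ?_, hx0⟩
    rw [hVdef]
    apply bil_span_zero
    rintro w ⟨l, rfl⟩
    have h1 : ∑ i, A (rV l) i * x i = 0 := congrFun (LinearMap.mem_ker.mp hx) l
    have h2 : bil x (A (rV l)) = ∑ i, A (rV l) i * x i := by
      rw [bil]
      exact Finset.sum_congr rfl fun i _ => mul_comm _ _
    rw [h2, h1]
  have hVw : ∀ x ∈ dualCode V, x ≠ 0 → t + 1 ≤ hWeight x := by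
    intro x hx hx0
    by_contra hlt
    push_neg at hlt
    set S : Finset (Fin n) := Finset.univ.filter (fun i => x i ≠ 0) with hSdef
    have hsw : hWeight x = S.card := hWeight_eq x
    have hs1 : 1 ≤ S.card := by
      rcases Function.ne_iff.mp hx0 with ⟨i, hi⟩
      have hi' : x i ≠ 0 := by simpa using hi
      exact Finset.card_pos.mpr ⟨i, by simp [hSdef, hi']⟩
    set σ : Fin S.card → Fin n := fun j => ((S.orderIsoOfFin rfl) j : Fin n) with hσdef
    have hσinj : Function.Injective σ := fun a b hab =>
      (S.orderIsoOfFin rfl).injective (Subtype.ext hab)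
    have hσne : ∀ j, x (σ j) ≠ 0 := by
      intro j
      have hmem : σ j ∈ S := ((S.orderIsoOfFin rfl) j).2
      simpa [hSdef] using hmem
    have hM : (A.submatrix rV σ).mulVec (fun j => x (σ j)) = 0 := by
      funext l
      have h0 : bil x (A (rV l)) = 0 := (mem_dualCode.mp hx) _ (hVrow l)
      have h0' : ∑ i, A (rV l) i * x i = 0 := by
        rw [bil] at h0
        rw [← h0]
        exact Finset.sum_congr rfl fun i _ => mul_comm _ _
      have hss : ∑ j : Fin S.card, A (rV l) (σ j) * x (σ j) = ∑ i, A (rV l) i * x i :=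
        sum_support rfl (fun i => A (rV l) i * x i)
          (fun i hi => by
            have hxi : x i = 0 := by
              by_contra hne; exact hi (by simp [hSdef, hne])
            simp [hxi])
      exact hss.trans h0'
    have hy0 := (hAall.submatrix hrV hσinj).fullCol (by omega) hM
    exact hσne ⟨0, hs1⟩ (congrFun hy0 ⟨0, hs1⟩)
  have hV1 : t + 1 ≤ minDist (dualCode V) := minDist_lower hVdual_bot hVw
  refine ⟨h2t1, ?_, ?_, ?_, ?_⟩
  · intro w hw
    refine mem_dualCode.mpr fun cc hcc => ?_
    rw [bil_comm]
    rw [hCdef] at hcc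
    exact hcc w hw
  · rw [hdimU]; omega
  · omega
  · omega
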